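/- arXiv:0906.0239 — 2 statements merged into one kernel-verified Lean document; each statement's English description precedes it below -/
import Mathlib

section
/- Let $H$ be a Hopf algebra with antipode $S$, $C$ a coalgebra in the Yetter-Drinfeld category ${}^H_H\mathcal{YD}$, and $\alpha : C \to H$ a dual normalized Sweedler 1-cocycle, i.e. $\alpha(x)_{(1)} \otimes \alpha(x)_{(2)} = \alpha(x^{(1)})\,x^{(2)}_{\langle -1\rangle} \otimes \alpha(x^{(2)}_{\langle 0\rangle})$ and $\varepsilon_H\alpha = \varepsilon_C$. Then $\alpha$ is convolution invertible with inverse $\alpha'(x) = x_{\langle -1\rangle}\, S(\alpha(x_{\langle 0\rangle}))$. -/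
/-!
`α * α' = ε`: by the cocycle condition, `α(x⁽¹⁾) x⁽²⁾₍₋₁₎ S(α(x⁽²⁾₍₀₎)) = α(x)₍₁₎ S(α(x)₍₂₎)`,
which is `ε(α x) = ε(x)`.

`α' * α = ε`: coassociativity and counitality of `ρ` give `z₍₋₁₎ S(z₍₀₎₍₋₁₎) ⊗ z₍₀₎₍₀₎ = 1 ⊗ z`.
Inserting this for `z = x⁽²⁾`, and using that `S` is an antihomomorphism and that `C` is a
comodule coalgebra, `x⁽¹⁾₍₋₁₎ S(α(x⁽¹⁾₍₀₎)) α(x⁽²⁾) = x₍₋₁₎ S(α(y⁽¹⁾) y⁽²⁾₍₋₁₎) α(y⁽²⁾₍₀₎)` with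
`y = x₍₀₎`. The cocycle condition turns this into `x₍₋₁₎ S(α(y)₍₁₎) α(y)₍₂₎ = x₍₋₁₎ ε(y) = ε(x)`.
-/

open TensorProduct

/-- Convolution product on linear maps `C → H`. -/
noncomputable def convH {K H C : Type*} [CommRing K] [Ring H] [HopfAlgebra K H]
    [AddCommGroup C] [Module K C] [Coalgebra K C] (f g : C →ₗ[K] H) : C →ₗ[K] H :=
  (LinearMap.mul' K H) ∘ₗ (TensorProduct.map f g) ∘ₗ Coalgebra.comul

open LinearMap Coalgebra HopfAlgebra

section Algebra

variable {K A M N : Type*} [CommSemiring K] [Semiring A] [Algebra K A]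
  [AddCommMonoid M] [Module K M] [AddCommMonoid N] [Module K N]

theorem rTensor_algebraLinearMap_comp_apply (f : N →ₗ[K] K) (t : N ⊗[K] M) :
    (Algebra.linearMap K A ∘ₗ f).rTensor M t = 1 ⊗ₜ TensorProduct.lid K M (f.rTensor M t) := by
  induction t using TensorProduct.induction_on with
  | zero => simp
  | tmul n m => simp [Algebra.algebraMap_eq_smul_one, smul_tmul]
  | add s t hs ht => simp [hs, ht, tmul_add]

theorem mul'_comp_lTensor_algebraLinearMap :
    mul' K A ∘ₗ (Algebra.linearMap K A).lTensor A = (TensorProduct.rid K A).toLinearMap := by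
  ext
  simp [Algebra.algebraMap_eq_smul_one]

end Algebra

section Comodule

variable {K H C : Type*} [CommSemiring K] [Semiring H] [HopfAlgebra K H]
  [AddCommMonoid C] [Module K C]

/-- `z₍₋₁₎ S(z₍₀₎₍₋₁₎) ⊗ z₍₀₎₍₀₎ = 1 ⊗ z` -/
theorem rTensor_mul_antipode_coaction {ρ : C →ₗ[K] H ⊗[K] C}
    (hcounit : (TensorProduct.lid K C).toLinearMap ∘ₗ counit.rTensor C ∘ₗ ρ = LinearMap.id)
    (hcoassoc : comul.rTensor C ∘ₗ ρ =
      (TensorProduct.assoc K H H C).symm.toLinearMap ∘ₗ ρ.lTensor H ∘ₗ ρ) (z : C) :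
    (mul' K H ∘ₗ (antipode K).lTensor H).rTensor C
        ((TensorProduct.assoc K H H C).symm (ρ.lTensor H (ρ z))) = 1 ⊗ₜ z := by
  have hρρ : (TensorProduct.assoc K H H C).symm (ρ.lTensor H (ρ z)) = comul.rTensor C (ρ z) :=
    (LinearMap.congr_fun hcoassoc z).symm
  rw [hρρ, ← rTensor_comp_apply, comp_assoc, mul_antipode_lTensor_comul,
    rTensor_algebraLinearMap_comp_apply]
  exact congr(1 ⊗ₜ $hcounit z)

variable (ρ : C →ₗ[K] H ⊗[K] C) (α : C →ₗ[K] H)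

/-- `y ⊗ z ↦ α(y) z₍₋₁₎ ⊗ α(z₍₀₎)`: the cocycle condition reads `Δ ∘ α = cocycleComul ρ α ∘ Δ`. -/
noncomputable def cocycleComul : C ⊗[K] C →ₗ[K] H ⊗[K] H :=
  map (mul' K H) α ∘ₗ (TensorProduct.assoc K H H C).symm.toLinearMap ∘ₗ map α ρ

/-- `y ⊗ z ↦ S(α(y) z₍₋₁₎) α(z₍₀₎)` -/
noncomputable def cocycleAntipode : C ⊗[K] C →ₗ[K] H :=
  mul' K H ∘ₗ (antipode K).rTensor H ∘ₗ cocycleComul ρ α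

/-- `x ↦ x₍₋₁₎ S(α(x₍₀₎))` -/
noncomputable def cocycleInv : C →ₗ[K] H :=
  mul' K H ∘ₗ map LinearMap.id (antipode K ∘ₗ α) ∘ₗ ρ

theorem cocycleComul_tmul (y z : C) :
    cocycleComul ρ α (y ⊗ₜ z) = map (mulLeft K (α y)) α (ρ z) := by
  simp only [cocycleComul, coe_comp, LinearEquiv.coe_coe, Function.comp_apply, map_tmul]
  induction ρ z using TensorProduct.induction_on with
  | zero => simp
  | tmul h w => simp
  | add s t hs ht => simp [tmul_add, hs, ht]

theorem cocycleInv_apply (y : C) :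
    cocycleInv ρ α y = mul' K H ((antipode K ∘ₗ α).lTensor H (ρ y)) := rfl

theorem mul'_map_self_cocycleInv :
    mul' K H ∘ₗ map α (cocycleInv ρ α) =
      mul' K H ∘ₗ (antipode K).lTensor H ∘ₗ cocycleComul ρ α := by
  ext y z
  simp only [AlgebraTensorModule.curry_apply, curry_apply, coe_restrictScalars, comp_apply,
    map_tmul, cocycleComul_tmul, cocycleInv_apply]
  induction ρ z using TensorProduct.induction_on with
  | zero => simp
  | tmul h w => simp [mul_assoc]
  | add s t hs ht => simp_all [mul_add]

/-- `z₍₋₁₎ S(α(y) z₍₀₎₍₋₁₎) α(z₍₀₎₍₀₎) = S(α y) α z` -/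
theorem mul'_lTensor_cocycleAntipode_mk
    (hcounit : (TensorProduct.lid K C).toLinearMap ∘ₗ counit.rTensor C ∘ₗ ρ = LinearMap.id)
    (hcoassoc : comul.rTensor C ∘ₗ ρ =
      (TensorProduct.assoc K H H C).symm.toLinearMap ∘ₗ ρ.lTensor H ∘ₗ ρ) (y z : C) :
    mul' K H ((cocycleAntipode ρ α ∘ₗ TensorProduct.mk K C C y).lTensor H (ρ z)) =
      antipode K (α y) * α z := by
  have expand : ∀ t : H ⊗[K] C,
      mul' K H ((cocycleAntipode ρ α ∘ₗ TensorProduct.mk K C C y).lTensor H t) =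
        mul' K H (map (mulRight K (antipode K (α y))) α
          ((mul' K H ∘ₗ (antipode K).lTensor H).rTensor C
            ((TensorProduct.assoc K H H C).symm (ρ.lTensor H t)))) := by
    intro t
    induction t using TensorProduct.induction_on with
    | zero => simp
    | tmul b w =>
      simp only [cocycleAntipode, lTensor_tmul, comp_apply, mk_apply, cocycleComul_tmul]
      induction ρ w using TensorProduct.induction_on with
      | zero => simp
      | tmul c w' => simp [antipode_mul_antidistrib, mul_assoc]
      | add s t hs ht => simp_all [tmul_add]
    | add s t hs ht => simp_all
  rw [expand, rTensor_mul_antipode_coaction hcounit hcoassoc]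
  simp

theorem mul'_map_cocycleInv_self
    (hcounit : (TensorProduct.lid K C).toLinearMap ∘ₗ counit.rTensor C ∘ₗ ρ = LinearMap.id)
    (hcoassoc : comul.rTensor C ∘ₗ ρ =
      (TensorProduct.assoc K H H C).symm.toLinearMap ∘ₗ ρ.lTensor H ∘ₗ ρ) :
    mul' K H ∘ₗ map (cocycleInv ρ α) α =
      mul' K H ∘ₗ (cocycleAntipode ρ α).lTensor H ∘ₗ (mul' K H).rTensor (C ⊗[K] C) ∘ₗ
        (TensorProduct.tensorTensorTensorComm K H C H C).toLinearMap ∘ₗ map ρ ρ := by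
  ext y z
  simp only [AlgebraTensorModule.curry_apply, curry_apply, coe_restrictScalars, comp_apply,
    map_tmul, cocycleInv_apply, LinearEquiv.coe_coe]
  induction ρ y using TensorProduct.induction_on with
  | zero => simp
  | tmul a y' =>
    simp only [lTensor_tmul, comp_apply, mul'_apply]
    rw [mul_assoc, ← mul'_lTensor_cocycleAntipode_mk ρ α hcounit hcoassoc]
    induction ρ z using TensorProduct.induction_on with
    | zero => simp
    | tmul b z' => simp [mul_assoc]
    | add s t hs ht => simp_all [tmul_add, mul_add]
  | add s t hs ht => simp_all [add_tmul]

variable [Coalgebra K C] {ρ α}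

theorem comp_cocycleComul_comul
    (hΔα : comul ∘ₗ α = cocycleComul ρ α ∘ₗ comul) (hεα : counit ∘ₗ α = counit)
    {f : H ⊗[K] H →ₗ[K] H} (hf : f ∘ₗ comul = Algebra.linearMap K H ∘ₗ counit) :
    f ∘ₗ cocycleComul ρ α ∘ₗ comul = Algebra.linearMap K H ∘ₗ counit := by
  rw [← hΔα, ← comp_assoc, hf, comp_assoc, hεα]

theorem cocycleAntipode_comp_comul
    (hΔα : comul ∘ₗ α = cocycleComul ρ α ∘ₗ comul) (hεα : counit ∘ₗ α = counit) :
    cocycleAntipode ρ α ∘ₗ comul = Algebra.linearMap K H ∘ₗ counit := by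
  simpa only [cocycleAntipode, comp_assoc] using
    comp_cocycleComul_comul hΔα hεα (f := mul' K H ∘ₗ (antipode K).rTensor H)
      mul_antipode_rTensor_comul

end Comodule

section Convolution

variable {K H C : Type*} [CommRing K] [Ring H] [HopfAlgebra K H]
  [AddCommGroup C] [Module K C] [Coalgebra K C] {ρ : C →ₗ[K] H ⊗[K] C} {α : C →ₗ[K] H}

theorem convH_self_cocycleInv
    (hΔα : comul ∘ₗ α = cocycleComul ρ α ∘ₗ comul) (hεα : counit ∘ₗ α = counit) :
    convH α (cocycleInv ρ α) = Algebra.linearMap K H ∘ₗ counit := by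
  rw [convH, ← comp_assoc, mul'_map_self_cocycleInv]
  simpa only [comp_assoc] using comp_cocycleComul_comul hΔα hεα
    (f := mul' K H ∘ₗ (antipode K).lTensor H) mul_antipode_lTensor_comul

theorem convH_cocycleInv_self
    (hcounit : (TensorProduct.lid K C).toLinearMap ∘ₗ counit.rTensor C ∘ₗ ρ = LinearMap.id)
    (hcoassoc : comul.rTensor C ∘ₗ ρ =
      (TensorProduct.assoc K H H C).symm.toLinearMap ∘ₗ ρ.lTensor H ∘ₗ ρ)
    (hcompΔ : comul.lTensor H ∘ₗ ρ = (mul' K H).rTensor (C ⊗[K] C) ∘ₗ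
        (TensorProduct.tensorTensorTensorComm K H C H C).toLinearMap ∘ₗ map ρ ρ ∘ₗ comul)
    (hcompε : (TensorProduct.rid K H).toLinearMap ∘ₗ counit.lTensor H ∘ₗ ρ =
      Algebra.linearMap K H ∘ₗ counit)
    (hΔα : comul ∘ₗ α = cocycleComul ρ α ∘ₗ comul) (hεα : counit ∘ₗ α = counit) :
    convH (cocycleInv ρ α) α = Algebra.linearMap K H ∘ₗ counit := by
  rw [convH, ← comp_assoc, mul'_map_cocycleInv_self ρ α hcounit hcoassoc]
  simp only [comp_assoc]
  rw [← hcompΔ, ← comp_assoc ρ, ← lTensor_comp, cocycleAntipode_comp_comul hΔα hεα, lTensor_comp, comp_assoc,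
    ← comp_assoc _ _ (mul' K H), mul'_comp_lTensor_algebraLinearMap, hcompε]

end Convolution

theorem sweedler_cocycle_inverse_general {K H C : Type*} [CommRing K] [Ring H]
    [HopfAlgebra K H] [AddCommGroup C] [Module K C] [Coalgebra K C]
    (ρ : C →ₗ[K] H ⊗[K] C)
    -- coaction axioms:
    (hcounit : (TensorProduct.lid K C).toLinearMap ∘ₗ
        (TensorProduct.map Coalgebra.counit LinearMap.id) ∘ₗ ρ = LinearMap.id)
    (hcoassoc : (TensorProduct.map Coalgebra.comul LinearMap.id) ∘ₗ ρ =
      (TensorProduct.assoc K H H C).symm.toLinearMap ∘ₗ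
        (TensorProduct.map LinearMap.id ρ) ∘ₗ ρ)
    -- `C` is a comodule coalgebra:
    (hcompΔ : (TensorProduct.map LinearMap.id Coalgebra.comul) ∘ₗ ρ =
      (TensorProduct.map (LinearMap.mul' K H) LinearMap.id) ∘ₗ
        (TensorProduct.tensorTensorTensorComm K H C H C).toLinearMap ∘ₗ
        (TensorProduct.map ρ ρ) ∘ₗ Coalgebra.comul)
    (hcompε : (TensorProduct.rid K H).toLinearMap ∘ₗ
        (TensorProduct.map LinearMap.id Coalgebra.counit) ∘ₗ ρ =
      (Algebra.linearMap K H) ∘ₗ Coalgebra.counit)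
    -- `α` is a dual normalized Sweedler 1-cocycle:
    (α : C →ₗ[K] H)
    (hΔα : (Coalgebra.comul (R := K) (A := H)) ∘ₗ α =
      (TensorProduct.map (LinearMap.mul' K H) α) ∘ₗ
        (TensorProduct.assoc K H H C).symm.toLinearMap ∘ₗ
        (TensorProduct.map α ρ) ∘ₗ Coalgebra.comul)
    (hεα : (Coalgebra.counit (R := K) (A := H)) ∘ₗ α = Coalgebra.counit) :
    convH α ((LinearMap.mul' K H) ∘ₗ
        (TensorProduct.map LinearMap.id ((HopfAlgebra.antipode (R := K)) ∘ₗ α)) ∘ₗ ρ) =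
      (Algebra.linearMap K H) ∘ₗ Coalgebra.counit ∧
    convH ((LinearMap.mul' K H) ∘ₗ
        (TensorProduct.map LinearMap.id ((HopfAlgebra.antipode (R := K)) ∘ₗ α)) ∘ₗ ρ) α =
      (Algebra.linearMap K H) ∘ₗ Coalgebra.counit := by
  exact ⟨convH_self_cocycleInv hΔα hεα,
    convH_cocycleInv_self hcounit hcoassoc hcompΔ hcompε hΔα hεα⟩

/-- Let `C` be a coalgebra in `{}^H_H 𝒴𝒟` and `α : C → H` a dual
normalized Sweedler 1-cocycle.  Then `α` is convolution invertible with inverse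
`α'(x) = x₍₋₁₎ S(α(x₍₀₎))`. -/
theorem sweedler_cocycle_inverse {K H C : Type*} [CommRing K] [Ring H]
    [HopfAlgebra K H] [AddCommGroup C] [Module K C] [Coalgebra K C]
    (act : (H ⊗[K] C) →ₗ[K] C) (ρ : C →ₗ[K] H ⊗[K] C)
    -- module axioms:
    (hact_one : ∀ z : C, act ((1 : H) ⊗ₜ[K] z) = z)
    (hact_mul : ∀ (g h : H) (z : C),
      act ((g * h) ⊗ₜ[K] z) = act (g ⊗ₜ[K] act (h ⊗ₜ[K] z)))
    -- coaction axioms: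
    (hcounit : (TensorProduct.lid K C).toLinearMap ∘ₗ
        (TensorProduct.map Coalgebra.counit LinearMap.id) ∘ₗ ρ = LinearMap.id)
    (hcoassoc : (TensorProduct.map Coalgebra.comul LinearMap.id) ∘ₗ ρ =
      (TensorProduct.assoc K H H C).symm.toLinearMap ∘ₗ
        (TensorProduct.map LinearMap.id ρ) ∘ₗ ρ)
    -- the Yetter-Drinfeld compatibility condition, in the equivalent form
    -- `h₁ z₍₋₁₎ ⊗ h₂ · z₍₀₎ = (h₁ · z)₍₋₁₎ h₂ ⊗ (h₁ · z)₍₀₎`: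
    (hyd : (TensorProduct.map (LinearMap.mul' K H) act) ∘ₗ
        (TensorProduct.tensorTensorTensorComm K H H H C).toLinearMap ∘ₗ
        (TensorProduct.map Coalgebra.comul ρ) =
      (TensorProduct.map ((LinearMap.mul' K H) ∘ₗ (TensorProduct.comm K H H).toLinearMap)
          LinearMap.id) ∘ₗ
        (TensorProduct.assoc K H H C).symm.toLinearMap ∘ₗ
        (TensorProduct.map LinearMap.id ρ) ∘ₗ
        (TensorProduct.map LinearMap.id act) ∘ₗ
        (TensorProduct.assoc K H H C).toLinearMap ∘ₗ
        (TensorProduct.map (TensorProduct.comm K H H).toLinearMap LinearMap.id) ∘ₗ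
        (TensorProduct.map Coalgebra.comul LinearMap.id))
    -- `Δ_C` and `ε_C` are morphisms in the category:
    (hΔact : (Coalgebra.comul (R := K) (A := C)) ∘ₗ act =
      (TensorProduct.map act act) ∘ₗ
        (TensorProduct.tensorTensorTensorComm K H H C C).toLinearMap ∘ₗ
        (TensorProduct.map Coalgebra.comul Coalgebra.comul))
    (hεact : ∀ (h : H) (z : C), Coalgebra.counit (R := K) (act (h ⊗ₜ[K] z)) =
      Coalgebra.counit (R := K) h * Coalgebra.counit (R := K) z)
    -- `C` is a comodule coalgebra:
    (hcompΔ : (TensorProduct.map LinearMap.id Coalgebra.comul) ∘ₗ ρ =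
      (TensorProduct.map (LinearMap.mul' K H) LinearMap.id) ∘ₗ
        (TensorProduct.tensorTensorTensorComm K H C H C).toLinearMap ∘ₗ
        (TensorProduct.map ρ ρ) ∘ₗ Coalgebra.comul)
    (hcompε : (TensorProduct.rid K H).toLinearMap ∘ₗ
        (TensorProduct.map LinearMap.id Coalgebra.counit) ∘ₗ ρ =
      (Algebra.linearMap K H) ∘ₗ Coalgebra.counit)
    -- `α` is a dual normalized Sweedler 1-cocycle:
    (α : C →ₗ[K] H)
    (hΔα : (Coalgebra.comul (R := K) (A := H)) ∘ₗ α =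
      (TensorProduct.map (LinearMap.mul' K H) α) ∘ₗ
        (TensorProduct.assoc K H H C).symm.toLinearMap ∘ₗ
        (TensorProduct.map α ρ) ∘ₗ Coalgebra.comul)
    (hεα : (Coalgebra.counit (R := K) (A := H)) ∘ₗ α = Coalgebra.counit) :
    convH α ((LinearMap.mul' K H) ∘ₗ
        (TensorProduct.map LinearMap.id ((HopfAlgebra.antipode (R := K)) ∘ₗ α)) ∘ₗ ρ) =
      (Algebra.linearMap K H) ∘ₗ Coalgebra.counit ∧
    convH ((LinearMap.mul' K H) ∘ₗ
        (TensorProduct.map LinearMap.id ((HopfAlgebra.antipode (R := K)) ∘ₗ α)) ∘ₗ ρ) α =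
      (Algebra.linearMap K H) ∘ₗ Coalgebra.counit :=
  sweedler_cocycle_inverse_general ρ hcounit hcoassoc hcompΔ hcompε α hΔα hεα
end

section
/- (q-Chu–Vandermonde) For a field element $q$ and nonnegative integers $a, b, r$: $\sum_{k=0}^{r} \binom{a}{k}_q \binom{b}{r-k}_q \, q^{(a-k)(r-k)} = \binom{a+b}{r}_q$. -/
/-- The Gaussian binomial coefficient, defined by the `q`-Pascal recursion
`C(n+1, k+1)_q = C(n, k)_q + q^(k+1) * C(n, k+1)_q`; it vanishes for `k > n`. -/
def qbinom {K : Type*} [CommRing K] (q : K) : ℕ → ℕ → K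
  | _, 0 => 1
  | 0, _ + 1 => 0
  | n + 1, k + 1 => qbinom q n k + q ^ (k + 1) * qbinom q n (k + 1)

/-!
Split the first factor by the `q`-Pascal rule `C(a+1, k) = C(a, k-1) + q^k C(a, k)`. The first
parts sum to the left-hand side for `(a, b, r-1)`; in the second parts the weight `q^k` combines
with `q^((a+1-k)(r-k))` into `q^r · q^((a-k)(r-k))`, so they sum to `q^r` times the left-hand side
for `(a, b, r)`. Hence the left-hand side obeys the same recursion in `a` as `C(a+b, r)_q`, and
induction on `a` finishes.
-/

def qChuSum {R : Type*} [CommRing R] (q : R) (a b r : ℕ) : R :=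
  ∑ k ∈ Finset.range (r + 1), qbinom q a k * qbinom q b (r - k) * q ^ ((a - k) * (r - k))

section

variable {R : Type*} [CommRing R] (q : R)

@[simp]
lemma qbinom_zero_right (n : ℕ) : qbinom q n 0 = 1 := by
  cases n <;> rfl

@[simp]
lemma qbinom_zero_succ (k : ℕ) : qbinom q 0 (k + 1) = 0 := rfl

lemma qbinom_succ_succ (n k : ℕ) :
    qbinom q (n + 1) (k + 1) = qbinom q n k + q ^ (k + 1) * qbinom q n (k + 1) := rfl

lemma qbinom_eq_zero_of_lt {n k : ℕ} (h : n < k) : qbinom q n k = 0 := by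
  induction n generalizing k with
  | zero => obtain ⟨k, rfl⟩ := Nat.exists_eq_succ_of_ne_zero (by omega : k ≠ 0); rfl
  | succ n ih =>
    obtain ⟨k, rfl⟩ := Nat.exists_eq_succ_of_ne_zero (by omega : k ≠ 0)
    rw [qbinom_succ_succ, ih (by omega), ih (by omega), mul_zero, add_zero]

lemma qbinom_mul_pow_succ_mul_pow {a k r : ℕ} (hk : k ≤ r) :
    qbinom q a (k + 1) * q ^ (k + 1) * q ^ ((a - k) * (r - k)) =
      q ^ (r + 1) * (qbinom q a (k + 1) * q ^ ((a - (k + 1)) * (r - k))) := by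
  rcases lt_or_ge a (k + 1) with ha | ha
  · simp [qbinom_eq_zero_of_lt q ha]
  · have hexp : k + 1 + (a - k) * (r - k) = r + 1 + (a - (k + 1)) * (r - k) := by
      obtain ⟨m, rfl⟩ := Nat.exists_eq_add_of_le ha
      obtain ⟨s, rfl⟩ := Nat.exists_eq_add_of_le hk
      simp only [Nat.add_sub_cancel_left, show k + 1 + m - k = m + 1 by omega]
      ring
    rw [mul_assoc, ← pow_add, hexp, pow_add]
    ring

lemma qChuSum_zero_left (b r : ℕ) : qChuSum q 0 b r = qbinom q b r := by
  rw [qChuSum, Finset.sum_range_succ']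
  simp

lemma qChuSum_zero_right (a b : ℕ) : qChuSum q a b 0 = 1 := by
  simp [qChuSum]

lemma qChuSum_succ_succ (a b r : ℕ) :
    qChuSum q (a + 1) b (r + 1) = qChuSum q a b r + q ^ (r + 1) * qChuSum q a b (r + 1) := by
  have hshift : ∀ k ∈ Finset.range (r + 1),
      q ^ (k + 1) * qbinom q a (k + 1) * qbinom q b (r - k) * q ^ ((a - k) * (r - k)) =
        q ^ (r + 1) *
          (qbinom q a (k + 1) * qbinom q b (r - k) * q ^ ((a - (k + 1)) * (r - k))) := by
    intro k hk
    linear_combination qbinom q b (r - k) *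
      qbinom_mul_pow_succ_mul_pow q (Finset.mem_range_succ_iff.mp hk)
  simp only [qChuSum, Finset.sum_range_succ' _ (r + 1), qbinom_succ_succ, add_mul,
    Finset.sum_add_distrib, Nat.add_sub_add_right, Nat.sub_zero, qbinom_zero_right]
  rw [Finset.sum_congr rfl hshift, ← Finset.mul_sum]
  ring

end

/-- q-Chu–Vandermonde: for a field element `q` and natural numbers
`a, b, r`: `∑_{k=0}^{r} C(a,k)_q C(b,r-k)_q q^((a-k)(r-k)) = C(a+b, r)_q`. -/
theorem q_chu_vandermonde {K : Type*} [Field K] (q : K) (a b r : ℕ) :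
    ∑ k ∈ Finset.range (r + 1),
        qbinom q a k * qbinom q b (r - k) * q ^ ((a - k) * (r - k)) =
      qbinom q (a + b) r := by
  change qChuSum q a b r = _
  induction a generalizing r with
  | zero => rw [qChuSum_zero_left, zero_add]
  | succ a ih =>
    cases r with
    | zero => rw [qChuSum_zero_right, qbinom_zero_right]
    | succ r => rw [qChuSum_succ_succ, ih, ih, Nat.add_right_comm, qbinom_succ_succ]
end
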